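/- Let s > 0 and let ε be a real number with 0 < ε < min(1, 2s). Then there is a constant C = C(s,ε) such that for all real numbers A ≠ 0 and all B ∈ ℝ, ∫_ℝ ⟨x⟩^{-2s} ⟨Ax+B⟩^{-(1-ε)} dx ≤ C |A|^{-(1-ε)}. -/

import Mathlib

/-- Japanese bracket `⟨x⟩ = (1+x²)^{1/2}`. -/
noncomputable def jb (x : ℝ) : ℝ := Real.sqrt (1 + x ^ 2)

open MeasureTheory Real Set

lemma jb_nonneg (x : ℝ) : 0 ≤ jb x := Real.sqrt_nonneg _

lemma jb_def (x : ℝ) : jb x = Real.sqrt (1 + x ^ 2) := rfl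

lemma one_le_jb (x : ℝ) : 1 ≤ jb x := by
  have h : Real.sqrt 1 ≤ Real.sqrt (1 + x ^ 2) := Real.sqrt_le_sqrt (by nlinarith)
  rwa [Real.sqrt_one] at h

lemma jb_pos (x : ℝ) : 0 < jb x := lt_of_lt_of_le one_pos (one_le_jb x)

lemma abs_le_jb (x : ℝ) : |x| ≤ jb x := by
  rw [← Real.sqrt_sq_eq_abs]
  exact Real.sqrt_le_sqrt (by nlinarith)

lemma jb_scale (A t : ℝ) (ht : 1 ≤ |t|) : |A| / Real.sqrt 2 * jb t ≤ jb (A * t) := by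
  have ht2 : 1 ≤ t ^ 2 := by nlinarith [sq_abs t, abs_nonneg t]
  rw [jb_def, jb_def]
  have h2 : Real.sqrt 2 ^ 2 = 2 := Real.sq_sqrt (by norm_num)
  have h2' : (0:ℝ) < Real.sqrt 2 := Real.sqrt_pos.mpr (by norm_num)
  have h3 : Real.sqrt (1 + t ^ 2) ^ 2 = 1 + t ^ 2 := Real.sq_sqrt (by positivity)
  have h5 : 0 ≤ Real.sqrt (1 + (A * t) ^ 2) := Real.sqrt_nonneg _
  have hnn : 0 ≤ |A| / Real.sqrt 2 * Real.sqrt (1 + t ^ 2) := by positivity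
  have key : (|A| / Real.sqrt 2 * Real.sqrt (1 + t ^ 2)) ^ 2 ≤ 1 + (A * t) ^ 2 := by
    rw [mul_pow, div_pow, sq_abs, h2, h3]
    nlinarith [sq_nonneg A, sq_nonneg (A * t)]
  calc |A| / Real.sqrt 2 * Real.sqrt (1 + t ^ 2)
      = Real.sqrt ((|A| / Real.sqrt 2 * Real.sqrt (1 + t ^ 2)) ^ 2) := (Real.sqrt_sq hnn).symm
    _ ≤ Real.sqrt (1 + (A * t) ^ 2) := Real.sqrt_le_sqrt key

lemma jb_two_bracket (x y a b : ℝ) (ha : 0 ≤ a) (hb : 0 ≤ b) :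
    jb x ^ (-a) * jb y ^ (-b) ≤ jb x ^ (-(a + b)) + jb y ^ (-(a + b)) := by
  rcases le_total (jb x) (jb y) with h | h
  · have h1 : jb y ^ (-b) ≤ jb x ^ (-b) :=
      Real.rpow_le_rpow_of_nonpos (jb_pos x) h (by linarith)
    have h2 : jb x ^ (-a) * jb y ^ (-b) ≤ jb x ^ (-a) * jb x ^ (-b) :=
      mul_le_mul_of_nonneg_left h1 (Real.rpow_nonneg (jb_nonneg x) _)
    rw [← Real.rpow_add (jb_pos x), show -a + -b = -(a + b) by ring] at h2
    exact h2.trans (le_add_of_nonneg_right (Real.rpow_nonneg (jb_nonneg y) _))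
  · have h1 : jb x ^ (-a) ≤ jb y ^ (-a) :=
      Real.rpow_le_rpow_of_nonpos (jb_pos y) h (by linarith)
    have h2 : jb x ^ (-a) * jb y ^ (-b) ≤ jb y ^ (-a) * jb y ^ (-b) :=
      mul_le_mul_of_nonneg_right h1 (Real.rpow_nonneg (jb_nonneg y) _)
    rw [← Real.rpow_add (jb_pos y), show -a + -b = -(a + b) by ring] at h2
    exact h2.trans (le_add_of_nonneg_left (Real.rpow_nonneg (jb_nonneg x) _))

lemma integrable_jb_rpow {p : ℝ} (hp : 1 < p) :
    Integrable (fun x : ℝ => jb x ^ (-p)) := by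
  have h := integrable_rpow_neg_one_add_norm_sq (E := ℝ) (μ := volume) (r := p)
    (by simpa using hp)
  refine h.congr (Filter.Eventually.of_forall fun x => ?_)
  show (1 + ‖x‖ ^ 2) ^ (-p / 2) = jb x ^ (-p)
  rw [jb_def, Real.sqrt_eq_rpow, Real.norm_eq_abs, sq_abs,
    ← Real.rpow_mul (by positivity : (0:ℝ) ≤ 1 + x ^ 2)]
  congr 1
  ring

/-- Let `s > 0` and `0 < ε < min(1, 2s)`. There is `C = C(s,ε)` such that
for all `A ≠ 0` and all `B ∈ ℝ`, `∫_ℝ ⟨x⟩^{-2s} ⟨Ax+B⟩^{-(1-ε)} dx ≤ C |A|^{-(1-ε)}`. -/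
theorem stmt18 (s ε : ℝ) (hs : 0 < s) (hε0 : 0 < ε) (hε : ε < min 1 (2 * s)) :
    ∃ C : ℝ, 0 < C ∧ ∀ A B : ℝ, A ≠ 0 →
      (∫⁻ x : ℝ, ENNReal.ofReal (jb x ^ (-(2 * s)) * jb (A * x + B) ^ (-(1 - ε))))
        ≤ ENNReal.ofReal (C * |A| ^ (-(1 - ε))) := by
  have hε1 : ε < 1 := hε.trans_le (min_le_left _ _)
  have hεs : ε < 2 * s := hε.trans_le (min_le_right _ _)
  have hb0 : 0 < 1 - ε := by linarith
  set p : ℝ := 2 * s + (1 - ε) with hpdef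
  have hp1 : 1 < p := by rw [hpdef]; linarith
  have hint : Integrable (fun x : ℝ => jb x ^ (-p)) := integrable_jb_rpow hp1
  set K : ℝ := ∫ x : ℝ, jb x ^ (-p) with hKdef
  have hK0 : 0 ≤ K := integral_nonneg fun x => Real.rpow_nonneg (jb_nonneg x) _
  refine ⟨4 * K + 2 / ε, by positivity, fun A B hA => ?_⟩
  have hA0 : 0 < |A| := abs_pos.mpr hA
  set c : ℝ := -B / A with hcdef
  have hAc : ∀ x : ℝ, A * x + B = A * (x - c) := by
    intro x; rw [hcdef]; field_simp; ring
  set q : ℝ := -(1 - ε) with hqdef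
  have hq0 : q ≤ 0 := by rw [hqdef]; linarith
  have hq1 : (-1 : ℝ) < q := by rw [hqdef]; linarith
  have hqε : q + 1 = ε := by rw [hqdef]; ring
  set g₁ : ℝ → ℝ := fun x => 2 * |A| ^ q * (jb x ^ (-p) + jb (x - c) ^ (-p)) with hg1
  set g₂ : ℝ → ℝ := (Icc (c - 1) (c + 1)).indicator (fun x => |A * (x - c)| ^ q) with hg2
  have hg1nn : ∀ x, 0 ≤ g₁ x := by
    intro x
    have := Real.rpow_nonneg (jb_nonneg x) (-p)
    have := Real.rpow_nonneg (jb_nonneg (x - c)) (-p)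
    have := Real.rpow_nonneg (abs_nonneg A) q
    rw [hg1]; positivity
  have hg2nn : ∀ x, 0 ≤ g₂ x := by
    intro x
    rw [hg2]
    exact Set.indicator_nonneg (fun y _ => Real.rpow_nonneg (abs_nonneg _) q) x
  -- pointwise bound
  have hpt : ∀ x : ℝ, x ≠ c →
      jb x ^ (-(2 * s)) * jb (A * x + B) ^ q ≤ g₁ x + g₂ x := by
    intro x hx
    rw [hAc x]
    have hunn : 0 ≤ jb x ^ (-(2 * s)) := Real.rpow_nonneg (jb_nonneg x) _
    have hwnn : 0 ≤ jb (A * (x - c)) ^ q := Real.rpow_nonneg (jb_nonneg _) _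
    have hvnn : 0 ≤ jb (x - c) ^ q := Real.rpow_nonneg (jb_nonneg _) _
    have hDnn : 0 ≤ |A| ^ q := Real.rpow_nonneg (abs_nonneg A) _
    rcases le_or_gt 1 |x - c| with h1 | h1
    · -- far region
      have hsc := jb_scale A (x - c) h1
      have hposA : 0 < |A| / Real.sqrt 2 * jb (x - c) :=
        mul_pos (div_pos hA0 (Real.sqrt_pos.mpr (by norm_num))) (jb_pos _)
      have h2 : jb (A * (x - c)) ^ q ≤ (|A| / Real.sqrt 2 * jb (x - c)) ^ q :=
        Real.rpow_le_rpow_of_nonpos hposA hsc hq0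
      have h3 : (|A| / Real.sqrt 2 * jb (x - c)) ^ q
          = (|A| / Real.sqrt 2) ^ q * jb (x - c) ^ q :=
        Real.mul_rpow (by positivity) (jb_nonneg _)
      have h12 : (1 : ℝ) ≤ Real.sqrt 2 := by
        rw [show (1 : ℝ) = Real.sqrt 1 from (Real.sqrt_one).symm]
        exact Real.sqrt_le_sqrt (by norm_num)
      have h4 : (|A| / Real.sqrt 2) ^ q = |A| ^ q * (Real.sqrt 2) ^ (-q) := by
        rw [Real.div_rpow (abs_nonneg A) (Real.sqrt_nonneg 2), div_eq_mul_inv,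
          ← Real.rpow_neg (Real.sqrt_nonneg 2)]
      have h5 : (Real.sqrt 2 : ℝ) ^ (-q) ≤ 2 := by
        have hs2 : Real.sqrt 2 ^ (-q) ≤ Real.sqrt 2 ^ (1 : ℝ) :=
          Real.rpow_le_rpow_of_exponent_le h12 (by linarith)
        rw [Real.rpow_one] at hs2
        have : Real.sqrt 2 ≤ 2 := by
          nlinarith [Real.sq_sqrt (show (0:ℝ) ≤ 2 by norm_num), Real.sqrt_nonneg 2]
        linarith
      have hw : jb (A * (x - c)) ^ q ≤ 2 * |A| ^ q * jb (x - c) ^ q := by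
        have hs2nn : 0 ≤ (Real.sqrt 2 : ℝ) ^ (-q) := Real.rpow_nonneg (Real.sqrt_nonneg 2) _
        calc jb (A * (x - c)) ^ q ≤ (|A| / Real.sqrt 2) ^ q * jb (x - c) ^ q := by
              rw [← h3]; exact h2
          _ = |A| ^ q * (Real.sqrt 2) ^ (-q) * jb (x - c) ^ q := by rw [h4]
          _ ≤ 2 * |A| ^ q * jb (x - c) ^ q := by
              linarith [mul_le_mul_of_nonneg_right (mul_le_mul_of_nonneg_left h5 hDnn) hvnn]
      have htb : jb x ^ (-(2 * s)) * jb (x - c) ^ q ≤ jb x ^ (-p) + jb (x - c) ^ (-p) := by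
        have := jb_two_bracket x (x - c) (2 * s) (1 - ε) (by linarith) (by linarith)
        rw [show -(2 * s + (1 - ε)) = -p from by rw [hpdef], show -(1 - ε) = q from hqdef.symm] at this
        exact this
      calc jb x ^ (-(2 * s)) * jb (A * (x - c)) ^ q
          ≤ jb x ^ (-(2 * s)) * (2 * |A| ^ q * jb (x - c) ^ q) :=
            mul_le_mul_of_nonneg_left hw hunn
        _ = 2 * |A| ^ q * (jb x ^ (-(2 * s)) * jb (x - c) ^ q) := by ring
        _ ≤ 2 * |A| ^ q * (jb x ^ (-p) + jb (x - c) ^ (-p)) :=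
            mul_le_mul_of_nonneg_left htb (by positivity)
        _ = g₁ x := by rw [hg1]
        _ ≤ g₁ x + g₂ x := le_add_of_nonneg_right (hg2nn x)
    · -- near region
      have hmem : x ∈ Icc (c - 1) (c + 1) := by
        have h := abs_le.mp h1.le
        exact Set.mem_Icc.mpr ⟨by linarith [h.1], by linarith [h.2]⟩
      have hg2x : g₂ x = |A * (x - c)| ^ q := by
        rw [hg2, Set.indicator_of_mem hmem]
      have hx0 : 0 < |A * (x - c)| :=
        abs_pos.mpr (mul_ne_zero hA (sub_ne_zero.mpr hx))
      have hw2 : jb (A * (x - c)) ^ q ≤ |A * (x - c)| ^ q :=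
        Real.rpow_le_rpow_of_nonpos hx0 (abs_le_jb _) hq0
      have hu1 : jb x ^ (-(2 * s)) ≤ 1 :=
        Real.rpow_le_one_of_one_le_of_nonpos (one_le_jb x) (by linarith)
      calc jb x ^ (-(2 * s)) * jb (A * (x - c)) ^ q
          ≤ 1 * |A * (x - c)| ^ q := mul_le_mul hu1 hw2 hwnn zero_le_one
        _ = g₂ x := by rw [one_mul, hg2x]
        _ ≤ g₁ x + g₂ x := le_add_of_nonneg_left (hg1nn x)
  -- integrability facts
  have h01 : IntervalIntegrable (fun t : ℝ => |t| ^ q) volume 0 1 := by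
    have h := intervalIntegral.intervalIntegrable_rpow' (a := 0) (b := 1) hq1
    rw [intervalIntegrable_iff_integrableOn_Icc_of_le zero_le_one] at h ⊢
    exact h.congr_fun (fun t ht => by rw [abs_of_nonneg ht.1]) measurableSet_Icc
  have hneg : IntervalIntegrable (fun t : ℝ => |t| ^ q) volume (-1) 0 := by
    have h2 := (IntervalIntegrable.iff_comp_neg (f := fun t : ℝ => |t| ^ q) (a := 0) (b := 1) (by simp)).mp h01
    simp only [abs_neg, neg_zero] at h2
    exact h2.symm
  have habs : IntervalIntegrable (fun t : ℝ => |t| ^ q) volume (-1) 1 := hneg.trans h01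
  have hAt_eq : (fun t : ℝ => |A * t| ^ q) = fun t : ℝ => |A| ^ q * |t| ^ q :=
    funext fun t => by rw [abs_mul, Real.mul_rpow (abs_nonneg A) (abs_nonneg t)]
  have hAt : IntervalIntegrable (fun t : ℝ => |A * t| ^ q) volume (-1) 1 := by
    rw [hAt_eq]; exact habs.const_mul _
  have hshift : IntervalIntegrable (fun x : ℝ => |A * (x - c)| ^ q) volume (c - 1) (c + 1) := by
    have h := hAt.comp_sub_right c
    rw [show (-1 : ℝ) + c = c - 1 by ring, show (1 : ℝ) + c = c + 1 by ring] at h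
    exact h
  have hIO : IntegrableOn (fun x : ℝ => |A * (x - c)| ^ q) (Icc (c - 1) (c + 1)) :=
    (intervalIntegrable_iff_integrableOn_Icc_of_le (by linarith)).mp hshift
  have hg2int : Integrable g₂ := hIO.integrable_indicator measurableSet_Icc
  have hg1int : Integrable g₁ := (hint.add (hint.comp_sub_right c)).const_mul _
  -- integral computations
  have hint01 : ∫ t in (0:ℝ)..1, |t| ^ q = 1 / ε := by
    rw [intervalIntegral.integral_congr (g := fun t : ℝ => t ^ q)
      (fun t ht => by
        rw [Set.uIcc_of_le zero_le_one] at ht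
        simp only
        rw [abs_of_nonneg ht.1])]
    rw [integral_rpow (Or.inl hq1), hqε, Real.one_rpow, Real.zero_rpow hε0.ne']
    ring
  have hintneg : ∫ t in (-1:ℝ)..0, |t| ^ q = 1 / ε := by
    have h := intervalIntegral.integral_comp_neg (a := -1) (b := 0) (f := fun t : ℝ => |t| ^ q)
    simp only [abs_neg, neg_zero, neg_neg] at h
    rw [h, hint01]
  have hI2 : ∫ x, g₂ x = |A| ^ q * (2 / ε) := by
    rw [hg2, integral_indicator measurableSet_Icc, integral_Icc_eq_integral_Ioc,
      ← intervalIntegral.integral_of_le (by linarith : c - 1 ≤ c + 1)]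
    have h := intervalIntegral.integral_comp_sub_right (a := c - 1) (b := c + 1)
      (fun t : ℝ => |A * t| ^ q) c
    rw [show c - 1 - c = (-1 : ℝ) by ring, show c + 1 - c = (1 : ℝ) by ring] at h
    rw [h, hAt_eq, intervalIntegral.integral_const_mul,
      ← intervalIntegral.integral_add_adjacent_intervals hneg h01, hint01, hintneg]
    ring
  have hI1 : ∫ x, g₁ x = 2 * |A| ^ q * (K + K) := by
    rw [hg1]
    rw [integral_const_mul, integral_add hint (hint.comp_sub_right c),
      integral_sub_right_eq_self (fun x : ℝ => jb x ^ (-p)) c]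
  -- main chain
  have hae : ∀ᵐ x : ℝ, x ≠ c := by
    have hset : {x : ℝ | ¬x ≠ c} = {c} := by ext y; simp
    rw [MeasureTheory.ae_iff, hset]
    exact measure_singleton c
  calc (∫⁻ x : ℝ, ENNReal.ofReal (jb x ^ (-(2 * s)) * jb (A * x + B) ^ q))
      ≤ ∫⁻ x : ℝ, ENNReal.ofReal (g₁ x + g₂ x) := by
        refine lintegral_mono_ae ?_
        filter_upwards [hae] with x hx
        exact ENNReal.ofReal_le_ofReal (hpt x hx)
    _ = ENNReal.ofReal (∫ x, (g₁ x + g₂ x)) :=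
        (ofReal_integral_eq_lintegral_ofReal (hg1int.add hg2int)
          (Filter.Eventually.of_forall fun x => add_nonneg (hg1nn x) (hg2nn x))).symm
    _ ≤ ENNReal.ofReal ((4 * K + 2 / ε) * |A| ^ q) := by
        apply ENNReal.ofReal_le_ofReal
        rw [integral_add hg1int hg2int, hI1, hI2]
        ring_nf
        exact le_refl _
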